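/- (Eaves type theorem, sufficiency) Let K ⊆ ℝ^n be a nonempty closed convex set and f : ℝ^n → ℝ a polynomial of degree d ≥ 1 that is pseudoconvex on K, and suppose OP(K,f) is non-regular (i.e., Sol(K∞, f_d) is unbounded). If for every v ∈ Sol(K∞, f_d) \ {0} there exists x ∈ K with ⟨∇f(x), v⟩ > 0, then Sol(K,f) is nonempty and compact. -/

import Mathlib

open Filter Topology MvPolynomial Bornology
open scoped RealInnerProductSpace Pointwise

noncomputable section

/-- `ℝ^n` as Euclidean space. -/
abbrev En (n : ℕ) := EuclideanSpace ℝ (Fin n)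

/-- Evaluation of a multivariate polynomial at a point of `ℝ^n`. -/
def evalP {n : ℕ} (f : MvPolynomial (Fin n) ℝ) (x : En n) : ℝ :=
  MvPolynomial.eval (fun i => x i) f

/-- `Sol(C,g)`: the set of global minimizers of `g` on `C`. -/
def solSet {n : ℕ} (C : Set (En n)) (g : En n → ℝ) : Set (En n) :=
  {x ∈ C | ∀ y ∈ C, g x ≤ g y}

/-- `K∞`: the asymptotic cone of `K`. -/
def asympCone {n : ℕ} (K : Set (En n)) : Set (En n) :=
  {v | ∃ (t : ℕ → ℝ) (x : ℕ → En n), (∀ k, x k ∈ K) ∧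
    Tendsto t atTop atTop ∧ Tendsto (fun k => (t k)⁻¹ • x k) atTop (𝓝 v)}

/-- The gradient `∇f` of a polynomial, via its partial derivatives. -/
def polyGrad {n : ℕ} (f : MvPolynomial (Fin n) ℝ) (x : En n) : En n :=
  WithLp.toLp 2 (fun i => MvPolynomial.eval (fun j => x j) (MvPolynomial.pderiv i f))

/-- The `ℓ2`-norm of the coefficient vector of a polynomial. -/
def l2Norm {n : ℕ} (p : MvPolynomial (Fin n) ℝ) : ℝ :=
  Real.sqrt (∑ m ∈ p.support, (MvPolynomial.coeff m p) ^ 2)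

/-- `S` is generic (residual) in `X`: it contains a countable intersection of sets, each of
which is open and dense in `X` (with respect to the `ℓ2` coefficient metric). -/
def IsGenericIn {n : ℕ} (X S : Set (MvPolynomial (Fin n) ℝ)) : Prop :=
  ∃ D : ℕ → Set (MvPolynomial (Fin n) ℝ),
    (∀ k, D k ⊆ X ∧
      (∀ g ∈ D k, ∃ ε > 0, ∀ g' ∈ X, l2Norm (g' - g) < ε → g' ∈ D k) ∧
      (∀ g ∈ X, ∀ ε > 0, ∃ g' ∈ D k, l2Norm (g' - g) < ε)) ∧
    X ∩ (⋂ k, D k) ⊆ S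

/-!
Pseudoconvexity makes every local minimizer of `f` on `K` a global one and makes `Sol(K,f)`
convex (pseudoconvex functions are quasiconvex). Non-regularity gives a minimizer of the
homogeneous form `f_d` on the cone `K∞`, which forces `min f_d = 0` there.

Let `z_k ∈ K` escape to infinity with `f(z_k)` bounded. A limit `u` of `z_k / ‖z_k‖` lies in `K∞`
and satisfies `f_d(u) ≤ 0`, so `u ∈ Sol(K∞, f_d) \ {0}` and some `x ∈ K` has
`⟨∇f(x), u⟩ > 0`; then `⟨∇f(x), z_k - x⟩ ≥ 0` for large `k`, hence `f(x) ≤ f(z_k)`.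
For existence, take `z_k` minimizing `f` on `K ∩ B(x₀, k)`: either some `z_k` is interior to its
ball, hence a global minimizer, or the `z_k` escape and the point `x` above is a global minimizer.
For boundedness, take `z_k ∈ Sol(K,f)` escaping: then `x ∈ Sol(K,f)`, and as `Sol(K,f)` is closed
and convex also `x + u ∈ Sol(K,f)`; since `f` is constant on `Sol(K,f)` this contradicts
`⟨∇f(x), u⟩ > 0`.
-/

lemma exists_subseq_tendsto_inv_norm_smul {E : Type*} [NormedAddCommGroup E] [NormedSpace ℝ E]
    [ProperSpace E] {z : ℕ → E} (hz : Tendsto (fun k => ‖z k‖) atTop atTop) :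
    ∃ u : E, ‖u‖ = 1 ∧ ∃ φ : ℕ → ℕ, StrictMono φ ∧
      Tendsto (fun j => ‖z (φ j)‖⁻¹ • z (φ j)) atTop (𝓝 u) := by
  have hsphere : ∃ᶠ k in atTop, ‖z k‖⁻¹ • z k ∈ Metric.sphere (0 : E) 1 := by
    refine Eventually.frequently ((hz.eventually_gt_atTop 0).mono fun k hk => ?_)
    rw [mem_sphere_zero_iff_norm, norm_smul, norm_inv, norm_norm, inv_mul_cancel₀ hk.ne']
  obtain ⟨u, hu, φ, hφ, hlim⟩ := (isCompact_sphere (0 : E) 1).tendsto_subseq' hsphere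
  exact ⟨u, mem_sphere_zero_iff_norm.1 hu, φ, hφ, hlim⟩

lemma eventually_inner_sub_nonneg {F ι : Type*} [NormedAddCommGroup F] [InnerProductSpace ℝ F]
    {l : Filter ι} {t : ι → ℝ} {z : ι → F} {g u : F} (hgu : 0 < ⟪g, u⟫)
    (ht : Tendsto t l atTop) (hz : Tendsto (fun k => (t k)⁻¹ • z k) l (𝓝 u)) (x : F) :
    ∀ᶠ k in l, 0 ≤ ⟪g, z k - x⟫ := by
  have hgrow : Tendsto (fun k => t k * ⟪g, (t k)⁻¹ • z k⟫) l atTop :=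
    ht.atTop_mul_pos hgu (tendsto_const_nhds.inner hz)
  filter_upwards [hgrow.eventually_ge_atTop ⟪g, x⟫, ht.eventually_ne_atTop 0] with k hk hk0
  rwa [real_inner_smul_right, mul_inv_cancel_left₀ hk0, ← sub_nonneg, ← inner_sub_right] at hk

lemma IsClosed.add_mem_of_tendsto_inv_smul {E ι : Type*} [NormedAddCommGroup E]
    [NormedSpace ℝ E] {S : Set E} (hSc : IsClosed S) (hS : Convex ℝ S) {l : Filter ι} [l.NeBot]
    {x u : E} {t : ι → ℝ} {z : ι → E} (hx : x ∈ S) (hz : ∀ k, z k ∈ S)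
    (ht : Tendsto t l atTop) (hlim : Tendsto (fun k => (t k)⁻¹ • z k) l (𝓝 u)) : x + u ∈ S := by
  have hseg : Tendsto (fun k => x + (t k)⁻¹ • (z k - x)) l (𝓝 (x + u)) := by
    have h := (tendsto_const_nhds (x := x)).add (hlim.sub (ht.inv_tendsto_atTop.smul_const x))
    simpa [smul_sub] using h
  refine hSc.mem_of_tendsto hseg ?_
  filter_upwards [ht.eventually_ge_atTop 1] with k hk
  exact hS.add_smul_sub_mem hx (hz k) ⟨by positivity, inv_le_one_of_one_le₀ hk⟩

section

variable {n : ℕ}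

def PseudoconvexOn (K : Set (En n)) (f : MvPolynomial (Fin n) ℝ) : Prop :=
  ∀ x ∈ K, ∀ y ∈ K, 0 ≤ ⟪polyGrad f x, y - x⟫ → evalP f x ≤ evalP f y

-- The hypothesis on `Sol(K∞, f_d) \ {0}`, stated on `{v ∈ K∞ | f_d v ≤ 0} \ {0}`: the two sets
-- agree when `d ≥ 1` and `Sol(K∞, f_d)` is nonempty.
def AscentAlongAsympCone (K : Set (En n)) (f : MvPolynomial (Fin n) ℝ) (d : ℕ) : Prop :=
  ∀ v ∈ asympCone K, evalP (homogeneousComponent d f) v ≤ 0 → v ≠ 0 →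
    ∃ x ∈ K, 0 < ⟪polyGrad f x, v⟫

lemma inner_polyGrad (f : MvPolynomial (Fin n) ℝ) (x v : En n) :
    ⟪polyGrad f x, v⟫ = ∑ i, eval (fun j => x j) (pderiv i f) * v i := by
  simp [PiLp.inner_apply, polyGrad, mul_comm]

lemma hasFDerivAt_evalP (f : MvPolynomial (Fin n) ℝ) (x : En n) :
    HasFDerivAt (evalP f) (innerSL ℝ (polyGrad f x)) x := by
  induction f using MvPolynomial.induction_on with
  | C a =>
    have hgrad : innerSL ℝ (polyGrad (C a) x) = 0 := by ext v; simp [inner_polyGrad]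
    have hfun : evalP (C a : MvPolynomial (Fin n) ℝ) = fun _ => a := by
      funext y; simp [evalP]
    rw [hgrad, hfun]
    exact hasFDerivAt_const a x
  | add p q hp hq =>
    have hgrad : innerSL ℝ (polyGrad (p + q) x) =
        innerSL ℝ (polyGrad p x) + innerSL ℝ (polyGrad q x) := by
      ext v; simp [inner_polyGrad, add_mul, Finset.sum_add_distrib]
    have hfun : evalP (p + q) = fun y => evalP p y + evalP q y := by
      funext y; simp [evalP]
    rw [hgrad, hfun]
    exact hp.add hq
  | mul_X p j hp =>
    have hfun : evalP (p * X j) = fun y => evalP p y * y j := by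
      funext y; simp [evalP]
    rw [hfun]
    refine (hp.mul (EuclideanSpace.proj (𝕜 := ℝ) j).hasFDerivAt).congr_fderiv ?_
    ext v
    simp [inner_polyGrad, add_mul, Finset.sum_add_distrib, Pi.single_apply, evalP, apply_ite,
      Finset.mul_sum, mul_assoc]

lemma continuous_evalP (f : MvPolynomial (Fin n) ℝ) : Continuous (evalP f) :=
  continuous_iff_continuousAt.2 fun x => (hasFDerivAt_evalP f x).continuousAt

lemma isClosed_solSet {K : Set (En n)} {g : En n → ℝ} (hK : IsClosed K) (hg : Continuous g) :
    IsClosed (solSet K g) := by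
  have h : solSet K g = K ∩ ⋂ y ∈ K, {x | g x ≤ g y} := by
    ext x; simp [solSet]
  rw [h]
  exact hK.inter (isClosed_biInter fun y _ => isClosed_le hg continuous_const)

section FirstOrder

variable {S : Set (En n)} {f : MvPolynomial (Fin n) ℝ} {x y : En n}

lemma inner_polyGrad_sub_nonneg_of_isLocalMinOn (hS : Convex ℝ S) (hx : x ∈ S) (hy : y ∈ S)
    (hmin : IsLocalMinOn (evalP f) S x) : 0 ≤ ⟪polyGrad f x, y - x⟫ :=
  hmin.hasFDerivWithinAt_nonneg (hasFDerivAt_evalP f x).hasFDerivWithinAt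
    (sub_mem_posTangentConeAt_of_segment_subset (hS.segment_subset hx hy))

lemma inner_polyGrad_sub_nonpos_of_isLocalMaxOn (hS : Convex ℝ S) (hx : x ∈ S) (hy : y ∈ S)
    (hmax : IsLocalMaxOn (evalP f) S x) : ⟪polyGrad f x, y - x⟫ ≤ 0 :=
  hmax.hasFDerivWithinAt_nonpos (hasFDerivAt_evalP f x).hasFDerivWithinAt
    (sub_mem_posTangentConeAt_of_segment_subset (hS.segment_subset hx hy))

end FirstOrder

namespace PseudoconvexOn

variable {K : Set (En n)} {f : MvPolynomial (Fin n) ℝ}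

lemma mem_solSet_of_isLocalMinOn (hf : PseudoconvexOn K f) (hK : Convex ℝ K) {x : En n}
    (hx : x ∈ K) (hmin : IsLocalMinOn (evalP f) K x) : x ∈ solSet K (evalP f) :=
  ⟨hx, fun y hy => hf x hx y hy (inner_polyGrad_sub_nonneg_of_isLocalMinOn hK hx hy hmin)⟩

-- For `w = a • x + b • y` we have `a • (x - w) + b • (y - w) = 0`, so the gradient at `w` pairs
-- nonnegatively with `x - w` or with `y - w`.
lemma quasiconvexOn (hf : PseudoconvexOn K f) (hK : Convex ℝ K) :
    QuasiconvexOn ℝ K (evalP f) := by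
  refine quasiconvexOn_iff_le_max.2 ⟨hK, fun x hx y hy a b ha hb hab => ?_⟩
  set w := a • x + b • y
  have hw : w ∈ K := hK hx hy ha hb hab
  have hcomb : a * ⟪polyGrad f w, x - w⟫ + b * ⟪polyGrad f w, y - w⟫ = 0 := by
    rw [← real_inner_smul_right, ← real_inner_smul_right, ← inner_add_right]
    have h : a • (x - w) + b • (y - w) = w - (a + b) • w := by simp only [w]; module
    rw [h, hab, one_smul, sub_self, inner_zero_right]
  by_cases hxw : 0 ≤ ⟪polyGrad f w, x - w⟫
  · exact (hf w hw x hx hxw).trans (le_max_left _ _)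
  · have hyw : 0 ≤ ⟪polyGrad f w, y - w⟫ := by
      by_contra hyw
      rw [not_le] at hxw hyw
      rcases ha.eq_or_lt with rfl | ha
      · simp_all
      · nlinarith [mul_neg_of_pos_of_neg ha hxw, mul_nonpos_of_nonneg_of_nonpos hb hyw.le]
    exact (hf w hw y hy hyw).trans (le_max_right _ _)

lemma convex_solSet (hf : PseudoconvexOn K f) (hK : Convex ℝ K) :
    Convex ℝ (solSet K (evalP f)) := by
  intro x hx y hy a b ha hb hab
  refine ⟨hK hx.1 hy.1 ha hb hab, fun z hz => ?_⟩
  exact ((quasiconvexOn_iff_le_max.1 (hf.quasiconvexOn hK)).2 hx.1 hy.1 ha hb hab).trans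
    (max_le (hx.2 z hz) (hy.2 z hz))

end PseudoconvexOn

lemma zero_mem_asympCone {K : Set (En n)} (hK : K.Nonempty) : (0 : En n) ∈ asympCone K := by
  obtain ⟨x, hx⟩ := hK
  have ht : Tendsto (fun k : ℕ => (k : ℝ)) atTop atTop := tendsto_natCast_atTop_atTop
  exact ⟨_, fun _ => x, fun _ => hx, ht, by simpa using ht.inv_tendsto_atTop.smul_const x⟩

lemma smul_mem_asympCone {K : Set (En n)} {v : En n} {c : ℝ} (hc : 0 < c)
    (hv : v ∈ asympCone K) : c • v ∈ asympCone K := by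
  obtain ⟨t, x, hx, ht, hlim⟩ := hv
  refine ⟨fun k => t k / c, x, hx, ht.atTop_div_const hc, (hlim.const_smul c).congr fun k => ?_⟩
  rw [smul_smul, inv_div, div_eq_mul_inv, mul_comm]

lemma evalP_smul_of_isHomogeneous {φ : MvPolynomial (Fin n) ℝ} {m : ℕ} (hφ : φ.IsHomogeneous m)
    (c : ℝ) (x : En n) : evalP φ (c • x) = c ^ m * evalP φ x := by
  simp only [evalP, eval_eq', Finset.mul_sum, PiLp.smul_apply, smul_eq_mul]
  refine Finset.sum_congr rfl fun e he => ?_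
  have hdeg : ∑ i, e i = m := by
    rw [← hφ (mem_support_iff.mp he)]
    simp [Finsupp.weight_apply, Finsupp.sum_fintype]
  rw [← hdeg]
  simp only [mul_pow, Finset.prod_mul_distrib, Finset.prod_pow_eq_pow_sum]
  ring

lemma evalP_nonneg_on_asympCone {K : Set (En n)} (hK : K.Nonempty) {φ : MvPolynomial (Fin n) ℝ}
    {d : ℕ} (hd : 1 ≤ d) (hφ : φ.IsHomogeneous d) (hsol : (solSet (asympCone K) (evalP φ)).Nonempty)
    {v : En n} (hv : v ∈ asympCone K) : 0 ≤ evalP φ v := by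
  obtain ⟨v₀, hv₀, hmin⟩ := hsol
  have h0 : evalP φ 0 = 0 := by
    simpa [zero_pow (by omega : d ≠ 0)] using evalP_smul_of_isHomogeneous hφ 0 0
  have hle0 : evalP φ v₀ ≤ 0 := h0 ▸ hmin 0 (zero_mem_asympCone hK)
  have hle2 : evalP φ v₀ ≤ 2 ^ d * evalP φ v₀ := by
    simpa [evalP_smul_of_isHomogeneous hφ] using hmin _ (smul_mem_asympCone two_pos hv₀)
  have h2d : (2 : ℝ) ≤ 2 ^ d := by simpa using pow_le_pow_right₀ one_le_two hd
  -- `hle0` and `hle2` force `φ v₀ = 0`, so `0` is the minimum of `φ` on `K∞`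
  nlinarith [hmin v hv]

lemma sum_range_homogeneousComponent {σ R : Type*} [CommSemiring R] {f : MvPolynomial σ R}
    {d : ℕ} (hdeg : f.totalDegree ≤ d) :
    ∑ j ∈ Finset.range (d + 1), homogeneousComponent j f = f := by
  conv_rhs => rw [← sum_homogeneousComponent f]
  refine (Finset.sum_subset (Finset.range_subset_range.2 (by omega)) fun j _ hj => ?_).symm
  exact homogeneousComponent_eq_zero _ _ (by simp only [Finset.mem_range] at hj; omega)

lemma evalP_eq_sum_homogeneousComponent {f : MvPolynomial (Fin n) ℝ} {d : ℕ}
    (hdeg : f.totalDegree ≤ d) (x : En n) :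
    evalP f x = ∑ j ∈ Finset.range (d + 1), evalP (homogeneousComponent j f) x := by
  conv_lhs => rw [← sum_range_homogeneousComponent hdeg]
  exact map_sum _ _ _

lemma tendsto_inv_pow_mul_evalP_smul {ι : Type*} {l : Filter ι} {f : MvPolynomial (Fin n) ℝ}
    {d : ℕ} (hdeg : f.totalDegree ≤ d) {t : ι → ℝ} {w : ι → En n} {u : En n}
    (ht : Tendsto t l atTop) (hw : Tendsto w l (𝓝 u)) :
    Tendsto (fun k => (t k)⁻¹ ^ d * evalP f (t k • w k)) l
      (𝓝 (evalP (homogeneousComponent d f) u)) := by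
  have hsplit : ∀ᶠ k in l,
      ∑ j ∈ Finset.range (d + 1), (t k)⁻¹ ^ (d - j) * evalP (homogeneousComponent j f) (w k) =
        (t k)⁻¹ ^ d * evalP f (t k • w k) := by
    filter_upwards [ht.eventually_ne_atTop 0] with k hk
    rw [evalP_eq_sum_homogeneousComponent hdeg, Finset.mul_sum]
    refine Finset.sum_congr rfl fun j hj => ?_
    obtain ⟨i, rfl⟩ : ∃ i, d = j + i := ⟨d - j, by simp only [Finset.mem_range] at hj; omega⟩
    rw [evalP_smul_of_isHomogeneous (homogeneousComponent_isHomogeneous j f),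
      Nat.add_sub_cancel_left, pow_add, inv_pow (t k) j]
    field_simp
  have hlim : ∑ j ∈ Finset.range (d + 1), (0 : ℝ) ^ (d - j) * evalP (homogeneousComponent j f) u =
      evalP (homogeneousComponent d f) u := by
    rw [Finset.sum_eq_single_of_mem d (Finset.self_mem_range_succ d) fun j hj hne => ?_]
    · simp
    · rw [zero_pow (by simp only [Finset.mem_range] at hj; omega), zero_mul]
  rw [← hlim]
  refine (tendsto_finsetSum _ fun j _ => ?_).congr' hsplit
  exact (ht.inv_tendsto_atTop.pow _).mul (((continuous_evalP _).tendsto u).comp hw)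

lemma evalP_homogeneousComponent_nonpos {ι : Type*} {l : Filter ι} [l.NeBot]
    {f : MvPolynomial (Fin n) ℝ} {d : ℕ} (hd : 1 ≤ d) (hdeg : f.totalDegree ≤ d) {t : ι → ℝ}
    {w : ι → En n} {u : En n} (ht : Tendsto t l atTop) (hw : Tendsto w l (𝓝 u)) {B : ℝ}
    (hB : ∀ᶠ k in l, evalP f (t k • w k) ≤ B) : evalP (homogeneousComponent d f) u ≤ 0 := by
  have h0 : Tendsto (fun k => (t k)⁻¹ ^ d * B) l (𝓝 0) := by
    simpa [zero_pow (by omega : d ≠ 0)] using (ht.inv_tendsto_atTop.pow d).mul_const B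
  refine le_of_tendsto_of_tendsto (tendsto_inv_pow_mul_evalP_smul hdeg ht hw) h0 ?_
  filter_upwards [hB, ht.eventually_gt_atTop 0] with k hk hk0
  exact mul_le_mul_of_nonneg_left hk (by positivity)

namespace AscentAlongAsympCone

variable {d : ℕ} {K : Set (En n)} {f : MvPolynomial (Fin n) ℝ}

lemma exists_eventually_evalP_le (hasc : AscentAlongAsympCone K f d) (hd : 1 ≤ d)
    (hdeg : f.totalDegree ≤ d) (hf : PseudoconvexOn K f) {z : ℕ → En n} (hzK : ∀ k, z k ∈ K)
    (hz : Tendsto (fun k => ‖z k‖) atTop atTop) {B : ℝ} (hzB : ∀ k, evalP f (z k) ≤ B) :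
    ∃ φ : ℕ → ℕ, StrictMono φ ∧ ∃ u x : En n, x ∈ K ∧ 0 < ⟪polyGrad f x, u⟫ ∧
      Tendsto (fun j => ‖z (φ j)‖⁻¹ • z (φ j)) atTop (𝓝 u) ∧
      ∀ᶠ j in atTop, evalP f x ≤ evalP f (z (φ j)) := by
  obtain ⟨u, hu, φ, hφ, hlim⟩ := exists_subseq_tendsto_inv_norm_smul hz
  have hzφ : Tendsto (fun j => ‖z (φ j)‖) atTop atTop := hz.comp hφ.tendsto_atTop
  have huK : u ∈ asympCone K := ⟨_, _, fun j => hzK (φ j), hzφ, hlim⟩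
  have hud : evalP (homogeneousComponent d f) u ≤ 0 := by
    refine evalP_homogeneousComponent_nonpos hd hdeg hzφ hlim (B := B) ?_
    filter_upwards [hzφ.eventually_gt_atTop 0] with j hj
    rw [smul_inv_smul₀ hj.ne']
    exact hzB (φ j)
  obtain ⟨x, hx, hxu⟩ := hasc u huK hud (norm_ne_zero_iff.1 (hu ▸ one_ne_zero))
  refine ⟨φ, hφ, u, x, hx, hxu, hlim, ?_⟩
  filter_upwards [eventually_inner_sub_nonneg hxu hzφ hlim x] with j hj
  exact hf x hx _ (hzK (φ j)) hj

lemma solSet_nonempty (hasc : AscentAlongAsympCone K f d) (hd : 1 ≤ d) (hdeg : f.totalDegree ≤ d)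
    (hf : PseudoconvexOn K f) (hK : K.Nonempty) (hKc : IsClosed K) (hKcv : Convex ℝ K) :
    (solSet K (evalP f)).Nonempty := by
  obtain ⟨x₀, hx₀⟩ := hK
  have hball : ∀ k : ℕ, x₀ ∈ K ∩ Metric.closedBall x₀ k :=
    fun k => ⟨hx₀, Metric.mem_closedBall_self k.cast_nonneg⟩
  choose z hz hzmin using fun k : ℕ =>
    ((isCompact_closedBall x₀ k).inter_left hKc).exists_isMinOn ⟨x₀, hball k⟩
      (continuous_evalP f).continuousOn
  by_cases hinterior : ∃ k, dist (z k) x₀ < k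
  · obtain ⟨k, hk⟩ := hinterior
    refine ⟨z k, hf.mem_solSet_of_isLocalMinOn hKcv (hz k).1 ?_⟩
    have hnhds : Metric.closedBall x₀ k ∈ 𝓝 (z k) :=
      Filter.mem_of_superset (Metric.isOpen_ball.mem_nhds hk) Metric.ball_subset_closedBall
    exact Filter.mem_of_superset (inter_mem_nhdsWithin K hnhds) fun y hy => hzmin k hy
  · push Not at hinterior
    have hzn : Tendsto (fun k => ‖z k‖) atTop atTop := by
      refine tendsto_atTop_mono (fun k => ?_)
        (tendsto_atTop_add_const_right _ (-‖x₀‖) tendsto_natCast_atTop_atTop)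
      have := norm_sub_le (z k) x₀
      rw [← dist_eq_norm] at this
      linarith [hinterior k]
    obtain ⟨φ, hφ, -, x, hx, -, -, hev⟩ :=
      hasc.exists_eventually_evalP_le hd hdeg hf (fun k => (hz k).1) hzn
        (fun k => hzmin k (hball k))
    refine ⟨x, hx, fun y hy => ?_⟩
    have hrad : ∀ᶠ j in atTop, dist y x₀ ≤ φ j :=
      (tendsto_natCast_atTop_atTop.comp hφ.tendsto_atTop).eventually_ge_atTop _
    obtain ⟨j, hxj, hyj⟩ := (hev.and hrad).exists
    exact hxj.trans (hzmin (φ j) ⟨hy, hyj⟩)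

lemma isBounded_solSet (hasc : AscentAlongAsympCone K f d) (hd : 1 ≤ d)
    (hdeg : f.totalDegree ≤ d) (hf : PseudoconvexOn K f) (hKc : IsClosed K) (hKcv : Convex ℝ K) :
    IsBounded (solSet K (evalP f)) := by
  set S := solSet K (evalP f)
  by_contra hunb
  simp only [isBounded_iff_forall_norm_le, not_exists, not_forall, not_le] at hunb
  choose z hz hzn using fun k : ℕ => hunb k
  have hzt : Tendsto (fun k => ‖z k‖) atTop atTop :=
    tendsto_atTop_mono (fun k => (hzn k).le) tendsto_natCast_atTop_atTop
  obtain ⟨φ, hφ, u, x, hx, hxu, hlim, hev⟩ :=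
    hasc.exists_eventually_evalP_le hd hdeg hf (fun k => (hz k).1) hzt
      (fun k => (hz k).2 _ (hz 0).1)
  obtain ⟨j, hj⟩ := hev.exists
  have hxS : x ∈ S := ⟨hx, fun y hy => hj.trans ((hz (φ j)).2 y hy)⟩
  have hSc : IsClosed S := isClosed_solSet hKc (continuous_evalP f)
  have hScv : Convex ℝ S := hf.convex_solSet hKcv
  have hxuS : x + u ∈ S :=
    hSc.add_mem_of_tendsto_inv_smul hScv hxS (fun j => hz (φ j)) (hzt.comp hφ.tendsto_atTop) hlim
  have hmax : IsLocalMaxOn (evalP f) S x := IsMaxOn.localize fun y hy => hy.2 x hx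
  have hnonpos := inner_polyGrad_sub_nonpos_of_isLocalMaxOn hScv hxS hxuS hmax
  rw [add_sub_cancel_left] at hnonpos
  exact hxu.not_ge hnonpos

end AscentAlongAsympCone

end

/-- Eaves type theorem (sufficiency): if `K` is nonempty closed convex, `f` is a pseudoconvex
polynomial of degree `d ≥ 1` on `K`, `OP(K,f)` is non-regular, and for every nonzero
`v ∈ Sol(K∞, f_d)` there is `x ∈ K` with `⟨∇f(x), v⟩ > 0`, then `Sol(K,f)` is nonempty and
compact. -/
theorem stmt5 {n d : ℕ} (hd : 1 ≤ d) (K : Set (En n)) (hKne : K.Nonempty) (hKcl : IsClosed K)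
    (hKcv : Convex ℝ K) (f : MvPolynomial (Fin n) ℝ) (hdeg : f.totalDegree = d)
    (hpc : ∀ x ∈ K, ∀ y ∈ K, 0 ≤ ⟪polyGrad f x, y - x⟫ → evalP f x ≤ evalP f y)
    (hnonreg : ¬ IsBounded (solSet (asympCone K) (evalP (homogeneousComponent d f))))
    (ha : ∀ v ∈ solSet (asympCone K) (evalP (homogeneousComponent d f)), v ≠ 0 →
      ∃ x ∈ K, 0 < ⟪polyGrad f x, v⟫) :
    (solSet K (evalP f)).Nonempty ∧ IsCompact (solSet K (evalP f)) := by
  have hasc : AscentAlongAsympCone K f d := fun v hv hle =>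
    ha v ⟨hv, fun y hy => hle.trans <| evalP_nonneg_on_asympCone hKne hd
      (homogeneousComponent_isHomogeneous d f) (nonempty_of_not_isBounded hnonreg) hy⟩
  exact ⟨hasc.solSet_nonempty hd hdeg.le hpc hKne hKcl hKcv,
    Metric.isCompact_of_isClosed_isBounded (isClosed_solSet hKcl (continuous_evalP f))
      (hasc.isBounded_solSet hd hdeg.le hpc hKcl hKcv)⟩

end
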